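/- Let p ≥ 3 be odd. Then the warping degree of the braid diagram B_W(p,p) satisfies d(B_W(p,p)) ≤ (p² - 1)/4. -/

import Mathlib

namespace Weaving

/-- A braid letter: 0-based generator index `k` (representing `σ_{k+1}`) and a sign
(`true` = positive crossing). -/
abbrev Letter := ℕ × Bool

/-- A braid diagram (word). Letters are read from top to bottom. -/
abbrev Word := List Letter

/-- Wellformedness of a word as a braid on `p` strands. -/
def WF (p : ℕ) (w : Word) : Prop := ∀ l ∈ w, l.1 + 2 ≤ p

/-- One round `σ_1 σ_2^{-1} σ_3 ⋯ σ_{p-1}^{(-1)^p}` of the weaving braid on `p` strands. -/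
def wRound (p : ℕ) : Word := (List.range (p - 1)).map fun k => (k, decide (k % 2 = 0))

/-- The weaving braid word `B_W(p,q) = (σ_1 σ_2^{-1} ⋯ σ_{p-1}^{(-1)^p})^q`. -/
def wWord (p q : ℕ) : Word := (List.replicate q (wRound p)).flatten

/-- The transposition of strand positions effected by one letter. -/
def letterPerm (l : Letter) : Equiv.Perm ℕ := Equiv.swap l.1 (l.1 + 1)

/-- The permutation of a braid word: sends the top position of a strand to its
bottom position. -/
def permOfWord (w : Word) : Equiv.Perm ℕ := ((w.map letterPerm).reverse).prod

/-- The position permutation just before the `n`-th crossing (0-based). -/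
def permUpTo (w : Word) (n : ℕ) : Equiv.Perm ℕ := permOfWord (w.take n)

/-- The label (top position) of the strand passing over at crossing `n`.
(Convention: at a positive letter `σ_k`, the strand at position `k` passes over.) -/
def overLabel (w : Word) (n : ℕ) : ℕ :=
  let l := w.getD n (0, true)
  (permUpTo w n)⁻¹ (if l.2 then l.1 else l.1 + 1)

/-- The label of the strand passing under at crossing `n`. -/
def underLabel (w : Word) (n : ℕ) : ℕ :=
  let l := w.getD n (0, true)
  (permUpTo w n)⁻¹ (if l.2 then l.1 + 1 else l.1)

/-- The number of warping crossing points of the braid diagram `w` with respect to a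
priority (ordering of base points) `r` on the strand labels: a crossing is warping
if the strand whose base point comes earlier passes under. -/
def warpCount (w : Word) (r : ℕ → ℕ) : ℕ :=
  ((List.range w.length).filter fun n =>
    decide (r (underLabel w n) < r (overLabel w n))).length

/-- The warping degree of a braid diagram: the minimum of `warpCount` over all
orderings of the base points at the tops of the strands. -/
noncomputable def warpingDegree (w : Word) : ℕ :=
  sInf { m | ∃ r : ℕ → ℕ, Function.Injective r ∧ warpCount w r = m }

/-- A sequence of base points (a list enumerating the strands `0,…,p-1`) follows the
closure if, whenever the closure-successor of the current strand has not yet appeared,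
it is the next base point. -/
def FollowsClosure (p : ℕ) (w : Word) (bs : List ℕ) : Prop :=
  bs.Perm (List.range p) ∧ ∀ m, m + 1 < bs.length →
    permOfWord w (bs.getD m 0) ∉ bs.take (m + 1) →
    bs.getD (m + 1) 0 = permOfWord w (bs.getD m 0)

/-- The closed warping degree of a braid diagram. -/
noncomputable def closedWarpingDegree (p : ℕ) (w : Word) : ℕ :=
  sInf { m | ∃ bs : List ℕ, FollowsClosure p w bs ∧
    warpCount w (fun a => List.idxOf a bs) = m }

/-- The strands of the closure component of strand `i`, in traversal order. -/
def strandCycle (w : Word) (p i : ℕ) : List ℕ :=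
  ((List.range p).map fun t => ((permOfWord w)^[t]) i).dedup

/-- The crossings met by strand `i` from top to bottom, with a flag recording whether
the strand passes under there. -/
def strandPassages (w : Word) (i : ℕ) : List (ℕ × Bool) :=
  ((List.range w.length).filter fun n =>
    (overLabel w n == i) || (underLabel w n == i)).map
    fun n => (n, underLabel w n == i)

/-- All the crossing passages of the closure component of strand `i`, in the cyclic
order in which they are traversed starting from the top of strand `i`. -/
def compPassages (w : Word) (p i : ℕ) : List (ℕ × Bool) :=
  (strandCycle w p i).flatMap (strandPassages w)

/-- `starts` contains exactly one strand representative on each closure component. -/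
def ValidStarts (p : ℕ) (w : Word) (starts : List ℕ) : Prop :=
  ∀ i < p, ∃! s, s ∈ starts ∧ i ∈ strandCycle w p s

/-- The passage sequence of the whole closure diagram determined by a choice of
base points: component representatives `starts` and rotations `ts` (positions of the
base points along the components). -/
def fullTraversal (w : Word) (p : ℕ) (starts ts : List ℕ) : List (ℕ × Bool) :=
  ((starts.zip ts).map fun st => (compPassages w p st.1).rotate st.2).flatten

/-- Same, for the reversed orientation of the closure. -/
def fullTraversalRev (w : Word) (p : ℕ) (starts ts : List ℕ) : List (ℕ × Bool) :=
  ((starts.zip ts).map fun st => ((compPassages w p st.1).reverse).rotate st.2).flatten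

/-- Crossing `n` is a warping crossing point of the traversal `T` if it is first met
as an under-crossing. -/
def warpInTraversal (T : List (ℕ × Bool)) (n : ℕ) : Bool :=
  ((T.filter fun x => x.1 == n).headD (0, false)).2

def traversalWarpCount (w : Word) (T : List (ℕ × Bool)) : ℕ :=
  ((List.range w.length).filter fun n => warpInTraversal T n).length

/-- The warping degree of the closure diagram of `w` (with the braid orientation):
the minimum number of warping crossing points over all choices of base points. -/
noncomputable def closureWarpingDegree (p : ℕ) (w : Word) : ℕ :=
  sInf { m | ∃ starts ts : List ℕ, ValidStarts p w starts ∧ ts.length = starts.length ∧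
    traversalWarpCount w (fullTraversal w p starts ts) = m }

/-- The warping degree of the closure diagram of `w` with reversed orientation. -/
noncomputable def closureWarpingDegreeRev (p : ℕ) (w : Word) : ℕ :=
  sInf { m | ∃ starts ts : List ℕ, ValidStarts p w starts ∧ ts.length = starts.length ∧
    traversalWarpCount w (fullTraversalRev w p starts ts) = m }

/-- Relations of the braid group on `p` strands (generators `0,…,p-2`). -/
def braidRels (p : ℕ) : Set (FreeGroup (Fin (p - 1))) :=
  { r | (∃ i j : Fin (p - 1), (i : ℕ) + 1 = (j : ℕ) ∧
          r = FreeGroup.of i * FreeGroup.of j * FreeGroup.of i *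
              (FreeGroup.of j * FreeGroup.of i * FreeGroup.of j)⁻¹) ∨
        (∃ i j : Fin (p - 1), (i : ℕ) + 2 ≤ (j : ℕ) ∧
          r = FreeGroup.of i * FreeGroup.of j * (FreeGroup.of j * FreeGroup.of i)⁻¹) }

/-- The braid group on `p` strands. -/
abbrev BraidGroup (p : ℕ) := PresentedGroup (braidRels p)

def letterToBraid (p : ℕ) (l : Letter) : BraidGroup p :=
  if h : l.1 < p - 1 then
    (if l.2 then PresentedGroup.of ⟨l.1, h⟩ else (PresentedGroup.of ⟨l.1, h⟩)⁻¹)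
  else 1

/-- The element of the braid group represented by a word. -/
def toBraid (p : ℕ) (w : Word) : BraidGroup p := (w.map (letterToBraid p)).prod

/-- Markov moves on closed braid diagrams: braid-group equality, conjugation
(cyclic permutation), and (de)stabilization. -/
inductive MarkovStep : ℕ × Word → ℕ × Word → Prop
  | braid (p : ℕ) (w w' : Word) : WF p w → WF p w' → toBraid p w = toBraid p w' →
      MarkovStep (p, w) (p, w')
  | conj (p : ℕ) (w₁ w₂ : Word) : WF p (w₁ ++ w₂) → MarkovStep (p, w₁ ++ w₂) (p, w₂ ++ w₁)
  | stab (p : ℕ) (w : Word) (b : Bool) : WF p w → 1 ≤ p →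
      MarkovStep (p, w) (p + 1, w ++ [(p - 1, b)])

/-- Two closed braid diagrams represent the same link iff they are Markov equivalent. -/
def MarkovEquiv : ℕ × Word → ℕ × Word → Prop := Relation.EqvGen MarkovStep

/-- The closure of `(p, w)` represents a trivial link (an unlink). -/
def IsTrivialClosure (p : ℕ) (w : Word) : Prop := ∃ r : ℕ, MarkovEquiv (p, w) (r, [])

/-- The canonical representative (minimum label) of the closure component of strand `i`. -/
def orbitMin (w : Word) (p i : ℕ) : ℕ := (strandCycle w p i).foldr min i

/-- The number of components of the closure of `(p, w)`. -/
def numComponents (p : ℕ) (w : Word) : ℕ := ((Finset.range p).image (orbitMin w p)).card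

/-- The closure of `(p, w)` is the unknot. -/
def IsUnknot (p : ℕ) (w : Word) : Prop := IsTrivialClosure p w ∧ numComponents p w = 1

/-- Apply crossing changes at the set `S` of crossing indices. -/
def flipAt (w : Word) (S : Finset ℕ) : Word :=
  (w.zipIdx.map Prod.swap).map fun nl => if nl.1 ∈ S then (nl.2.1, !nl.2.2) else nl.2

/-- `u(B)`: the minimum number of crossing changes on the braid diagram `w` making its
closure a trivial link. -/
noncomputable def braidUnknottingNumber (p : ℕ) (w : Word) : ℕ :=
  sInf { m | ∃ S : Finset ℕ, S ⊆ Finset.range w.length ∧ S.card = m ∧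
    IsTrivialClosure p (flipAt w S) }

/-- The unknotting (unlinking) number of the link represented by the closure of
`(p, w)`: the minimum number of crossing changes over all diagrams of the link. -/
noncomputable def linkUnknottingNumber (p : ℕ) (w : Word) : ℕ :=
  sInf { m | ∃ p' w', MarkovEquiv (p, w) (p', w') ∧
    ∃ S : Finset ℕ, S ⊆ Finset.range w'.length ∧ S.card = m ∧
      IsTrivialClosure p' (flipAt w' S) }

/-- The sign of crossing `n` (all strands oriented downwards). -/
def crossingSign (w : Word) (n : ℕ) : ℤ := if (w.getD n (0, true)).2 then 1 else -1

/-- The linking number of the closure components of strands `i` and `j` (assumed to lie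
on distinct components): half the signed count of their mutual crossings. -/
def lk (w : Word) (i j : ℕ) : ℤ :=
  (∑ n ∈ Finset.range w.length,
    if (overLabel w n = i ∧ underLabel w n = j) ∨ (overLabel w n = j ∧ underLabel w n = i)
    then crossingSign w n else 0) / 2

/-- The linking number between the closure components represented by `a` and `b`. -/
def compLk (p : ℕ) (w : Word) (a b : ℕ) : ℤ :=
  (∑ n ∈ Finset.range w.length,
    if (orbitMin w p (overLabel w n) = a ∧ orbitMin w p (underLabel w n) = b) ∨
       (orbitMin w p (overLabel w n) = b ∧ orbitMin w p (underLabel w n) = a)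
    then crossingSign w n else 0) / 2

/-- A link is proper if the total linking number of each component with all the
others is even. -/
def IsProper (p : ℕ) (w : Word) : Prop :=
  ∀ a ∈ (Finset.range p).image (orbitMin w p),
    (2 : ℤ) ∣ ∑ b ∈ ((Finset.range p).image (orbitMin w p)).erase a, compLk p w a b

/-- The closure of `(p, w)` is a split link. -/
def IsSplit (p : ℕ) (w : Word) : Prop :=
  ∃ p' w', MarkovEquiv (p, w) (p', w') ∧ WF p' w' ∧
    ∃ k, k + 1 < p' ∧ ∀ l ∈ w', l.1 ≠ k

/-- The connected sum diagram of the closures of a braid on `a` strands and a braid on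
`b` strands, as a braid on `a + b - 1` strands sharing one strand. -/
def connSum (a : ℕ) (w₁ w₂ : Word) : Word := w₁ ++ w₂.map fun l => (l.1 + (a - 1), l.2)

/-- The closure of `(p, w)` is a prime link: it is not the unknot and in every
connected-sum decomposition one factor is the unknot. -/
def IsPrime (p : ℕ) (w : Word) : Prop :=
  ¬ IsUnknot p w ∧
  ∀ a b : ℕ, ∀ w₁ w₂ : Word, 1 ≤ a → 1 ≤ b → WF a w₁ → WF b w₂ →
    MarkovEquiv (p, w) (a + b - 1, connSum a w₁ w₂) →
    IsUnknot a w₁ ∨ IsUnknot b w₂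

/-! ### Auxiliary lemmas for `warpingDegree_wWord_odd` -/

private def WL (k : ℕ) : Word := (List.range k).map fun j => (j, decide (j % 2 = 0))

private lemma wRound_eq_WL (p : ℕ) : wRound p = WL (p - 1) := rfl

private lemma permOfWord_append (u v : Word) :
    permOfWord (u ++ v) = permOfWord v * permOfWord u := by
  simp [permOfWord]

private lemma WL_succ (k : ℕ) : WL (k + 1) = WL k ++ [(k, decide (k % 2 = 0))] := by
  simp [WL, List.range_succ]

private def QP (k : ℕ) : Equiv.Perm ℕ := permOfWord (WL k)

private lemma QP_zero : QP 0 = 1 := rfl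

private lemma QP_succ (k : ℕ) : QP (k + 1) = Equiv.swap k (k + 1) * QP k := by
  rw [QP, WL_succ, permOfWord_append]
  have h : permOfWord [(k, decide (k % 2 = 0))] = Equiv.swap k (k + 1) := by
    simp [permOfWord, letterPerm]
  rw [h]
  rfl

private lemma QP_apply_zero (k : ℕ) : QP k 0 = k := by
  induction k with
  | zero => rfl
  | succ k ih =>
    rw [QP_succ, Equiv.Perm.mul_apply, ih, Equiv.swap_apply_left]

private lemma QP_apply_of_gt {k x : ℕ} (h : k < x) : QP k x = x := by
  induction k with
  | zero => rfl
  | succ k ih =>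
    rw [QP_succ, Equiv.Perm.mul_apply, ih (by omega),
      Equiv.swap_apply_of_ne_of_ne (by omega) (by omega)]

private lemma QP_apply_of_le {k x : ℕ} (h1 : 1 ≤ x) (h2 : x ≤ k) : QP k x = x - 1 := by
  induction k with
  | zero => omega
  | succ k ih =>
    rw [QP_succ, Equiv.Perm.mul_apply]
    rcases Nat.lt_or_ge x (k + 1) with h | h
    · rw [ih (by omega), Equiv.swap_apply_of_ne_of_ne (by omega) (by omega)]
    · have hx : x = k + 1 := by omega
      rw [hx, QP_apply_of_gt (by omega), Equiv.swap_apply_right]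
      omega

private lemma QP_symm_apply {p x : ℕ} (hp : 0 < p) (hx : x < p) :
    (QP (p - 1))⁻¹ x = (x + 1) % p := by
  have : QP (p - 1) ((x + 1) % p) = x := by
    rcases Nat.lt_or_ge x (p - 1) with h | h
    · rw [Nat.mod_eq_of_lt (by omega), QP_apply_of_le (by omega) (by omega)]
      omega
    · have hx1 : x = p - 1 := by omega
      have : (x + 1) % p = 0 := by
        rw [hx1]; simp [Nat.sub_add_cancel hp]
      rw [this, QP_apply_zero, hx1]
  conv_lhs => rw [← this]
  exact Equiv.symm_apply_apply _ _

private lemma QP_pow_symm {p : ℕ} (hp : 0 < p) (q : ℕ) {x : ℕ} (hx : x < p) :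
    ((QP (p - 1)) ^ q)⁻¹ x = (x + q) % p := by
  induction q with
  | zero => simp [Nat.mod_eq_of_lt hx]
  | succ q ih =>
    rw [pow_succ, mul_inv_rev, Equiv.Perm.mul_apply, ih,
      QP_symm_apply hp (Nat.mod_lt _ hp), Nat.mod_add_mod]
    congr 1

private lemma wWord_succ (p q : ℕ) : wWord p (q + 1) = wRound p ++ wWord p q := by
  simp [wWord, List.replicate_succ]

private lemma length_wRound (p : ℕ) : (wRound p).length = p - 1 := by
  simp [wRound]

private lemma length_wWord (p q : ℕ) : (wWord p q).length = q * (p - 1) := by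
  induction q with
  | zero => simp [wWord]
  | succ q ih => rw [wWord_succ, List.length_append, ih, length_wRound]; ring

private lemma permOfWord_wWord (p q : ℕ) : permOfWord (wWord p q) = (QP (p - 1)) ^ q := by
  induction q with
  | zero => simp [wWord, permOfWord]
  | succ q ih => rw [wWord_succ, permOfWord_append, ih, wRound_eq_WL, pow_succ]; rfl

private lemma take_wRound (p k : ℕ) (h : k ≤ p - 1) : (wRound p).take k = WL k := by
  rw [wRound, WL, ← List.map_take, List.take_range, min_eq_left h]

private lemma take_wWord (p : ℕ) (k : ℕ) (hk : k ≤ p - 1) :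
    ∀ q Q : ℕ, q < Q → (wWord p Q).take (q * (p - 1) + k) = wWord p q ++ WL k := by
  intro q
  induction q with
  | zero =>
    intro Q hQ
    obtain ⟨Q', rfl⟩ : ∃ Q', Q = Q' + 1 := ⟨Q - 1, by omega⟩
    rw [wWord_succ]
    simp only [Nat.zero_mul, Nat.zero_add]
    rw [List.take_append_of_le_length (by rw [length_wRound]; omega), take_wRound p k hk]
    simp [wWord]
  | succ q ih =>
    intro Q hQ
    obtain ⟨Q', rfl⟩ : ∃ Q', Q = Q' + 1 := ⟨Q - 1, by omega⟩
    rw [wWord_succ]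
    have hlen : (q + 1) * (p - 1) + k = (wRound p).length + (q * (p - 1) + k) := by
      rw [length_wRound]; ring
    rw [hlen, List.take_length_add_append, ih Q' (by omega), wWord_succ, List.append_assoc]

private lemma permUpTo_wWord (p q k : ℕ) (hk : k ≤ p - 1) (hq : q < p) :
    permUpTo (wWord p p) (q * (p - 1) + k) = QP k * (QP (p - 1)) ^ q := by
  rw [permUpTo, take_wWord p k hk q p hq, permOfWord_append, permOfWord_wWord]
  rfl

private lemma getD_wWord (p q k : ℕ) (hk : k < p - 1) (hq : q < p) :
    (wWord p p).getD (q * (p - 1) + k) (0, true) = (k, decide (k % 2 = 0)) := by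
  have htake := take_wWord p (k + 1) (by omega) q p hq
  have hlt : q * (p - 1) + k < q * (p - 1) + (k + 1) := by omega
  rw [List.getD_eq_getElem?_getD]
  have : (wWord p p)[q * (p - 1) + k]? =
      ((wWord p p).take (q * (p - 1) + (k + 1)))[q * (p - 1) + k]? := by
    rw [List.getElem?_take, if_pos hlt]
  rw [this, htake, WL_succ, ← List.append_assoc]
  rw [List.getElem?_append_right (by
    simp [List.length_append, length_wWord, WL, List.length_map, List.length_range])]
  have hidx : q * (p - 1) + k - (wWord p q ++ WL k).length = 0 := by
    simp [List.length_append, length_wWord, WL]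
  rw [hidx]
  rfl

private lemma overLabel_wWord {p : ℕ} (hp : 0 < p) {q k : ℕ} (hq : q < p) (hk : k < p - 1) :
    overLabel (wWord p p) (q * (p - 1) + k) =
      if k % 2 = 0 then q else (k + 1 + q) % p := by
  have h0 : (QP k)⁻¹ k = 0 := by
    apply (QP k).injective
    rw [← Equiv.Perm.mul_apply, mul_inv_cancel, Equiv.Perm.one_apply, QP_apply_zero]
  have h1 : (QP k)⁻¹ (k + 1) = k + 1 := by
    apply (QP k).injective
    rw [← Equiv.Perm.mul_apply, mul_inv_cancel, Equiv.Perm.one_apply, QP_apply_of_gt (by omega)]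
  unfold overLabel
  simp only [getD_wWord p q k hk hq, permUpTo_wWord p q k (by omega) hq, mul_inv_rev,
    Equiv.Perm.mul_apply]
  by_cases h : k % 2 = 0
  · simp only [h, decide_true, if_true, ↓reduceIte, h0]
    rw [QP_pow_symm hp q hp]
    simp [Nat.mod_eq_of_lt hq]
  · simp only [h, decide_false, if_false, Bool.false_eq_true, ↓reduceIte, h1]
    exact QP_pow_symm hp q (by omega)

private lemma underLabel_wWord {p : ℕ} (hp : 0 < p) {q k : ℕ} (hq : q < p) (hk : k < p - 1) :
    underLabel (wWord p p) (q * (p - 1) + k) =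
      if k % 2 = 0 then (k + 1 + q) % p else q := by
  have h0 : (QP k)⁻¹ k = 0 := by
    apply (QP k).injective
    rw [← Equiv.Perm.mul_apply, mul_inv_cancel, Equiv.Perm.one_apply, QP_apply_zero]
  have h1 : (QP k)⁻¹ (k + 1) = k + 1 := by
    apply (QP k).injective
    rw [← Equiv.Perm.mul_apply, mul_inv_cancel, Equiv.Perm.one_apply, QP_apply_of_gt (by omega)]
  unfold underLabel
  simp only [getD_wWord p q k hk hq, permUpTo_wWord p q k (by omega) hq, mul_inv_rev,
    Equiv.Perm.mul_apply]
  by_cases h : k % 2 = 0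
  · simp only [h, decide_true, if_true, ↓reduceIte, h1]
    exact QP_pow_symm hp q (by omega)
  · simp only [h, decide_false, if_false, Bool.false_eq_true, ↓reduceIte, h0]
    rw [QP_pow_symm hp q hp]
    simp [Nat.mod_eq_of_lt hq]

private lemma length_filter_range (f : ℕ → Bool) (N : ℕ) :
    ((List.range N).filter f).length = ∑ n ∈ Finset.range N, (if f n then 1 else 0) := by
  induction N with
  | zero => simp
  | succ N ih =>
    rw [List.range_succ, List.filter_append, List.length_append, ih, Finset.sum_range_succ]
    cases hfn : f N <;> simp [List.filter, hfn]

private lemma sum_range_mul_eq (M Q : ℕ) (f : ℕ → ℕ) :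
    ∑ n ∈ Finset.range (Q * M), f n =
      ∑ q ∈ Finset.range Q, ∑ k ∈ Finset.range M, f (q * M + k) := by
  induction Q with
  | zero => simp
  | succ Q ih =>
    rw [Nat.succ_mul, Finset.sum_range_add, ih, Finset.sum_range_succ]

private lemma sum_range_two_mul (M : ℕ) (h : ℕ → ℕ) :
    ∑ k ∈ Finset.range (2 * M), h k = ∑ j ∈ Finset.range M, (h (2 * j) + h (2 * j + 1)) := by
  induction M with
  | zero => simp
  | succ M ih =>
    have h2 : 2 * (M + 1) = 2 * M + 1 + 1 := by ring
    rw [h2, Finset.sum_range_succ, Finset.sum_range_succ, ih, Finset.sum_range_succ]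
    omega

private lemma key_inverse {p m j : ℕ} (hp : 0 < p) (hmj : (m * j) % p = 1) :
    ∀ q < p, (j * ((m * q) % p)) % p = q := by
  intro q hq
  rw [Nat.mul_mod_mod, show j * (m * q) = (m * j) * q by ring, ← Nat.mod_mul_mod, hmj,
    one_mul, Nat.mod_eq_of_lt hq]

private lemma reindex_sum {p m : ℕ} (hp : 0 < p) (hmj : (m * (p - 2)) % p = 1) (g : ℕ → ℕ) :
    ∑ q ∈ Finset.range p, g ((m * q) % p) = ∑ x ∈ Finset.range p, g x := by
  have hmj' : ((p - 2) * m) % p = 1 := by rwa [mul_comm] at hmj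
  refine Finset.sum_nbij' (fun q => (m * q) % p) (fun x => ((p - 2) * x) % p)
    (fun a ha => ?_) (fun a ha => ?_) (fun a ha => ?_) (fun a ha => ?_) (fun a ha => rfl)
  · exact Finset.mem_range.2 (Nat.mod_lt _ hp)
  · exact Finset.mem_range.2 (Nat.mod_lt _ hp)
  · exact key_inverse hp hmj a (Finset.mem_range.1 ha)
  · exact key_inverse hp hmj' a (Finset.mem_range.1 ha)

private lemma count_lt_shift {p e : ℕ} (hp : 0 < p) (he : 0 < e) (hep : e < p) :
    ∑ x ∈ Finset.range p, (if (e + x) % p < x then 1 else 0) = e := by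
  have hcong : ∀ x ∈ Finset.range p,
      (if (e + x) % p < x then 1 else 0) = if p - e ≤ x then 1 else 0 := by
    intro x hx
    have hx' : x < p := Finset.mem_range.1 hx
    rcases Nat.lt_or_ge x (p - e) with h | h
    · have h1 : (e + x) % p = e + x := Nat.mod_eq_of_lt (by omega)
      rw [h1, if_neg (by omega), if_neg (by omega)]
    · have h1 : (e + x) % p = e + x - p := by
        rw [Nat.mod_eq_sub_mod (by omega), Nat.mod_eq_of_lt (by omega)]
      rw [h1, if_pos (by omega), if_pos h]
  rw [Finset.sum_congr rfl hcong, ← Finset.card_filter]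
  have : (Finset.range p).filter (fun x => p - e ≤ x) = Finset.Ico (p - e) p := by
    ext y
    simp only [Finset.mem_filter, Finset.mem_range, Finset.mem_Ico]
    omega
  rw [this, Nat.card_Ico]
  omega

private lemma count_gt_shift {p e : ℕ} (hp : 0 < p) (he : 0 < e) (hep : e < p) :
    ∑ x ∈ Finset.range p, (if x < (e + x) % p then 1 else 0) = p - e := by
  have hcong : ∀ x ∈ Finset.range p,
      (if x < (e + x) % p then 1 else 0) = if x < p - e then 1 else 0 := by
    intro x hx
    have hx' : x < p := Finset.mem_range.1 hx
    rcases Nat.lt_or_ge x (p - e) with h | h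
    · have h1 : (e + x) % p = e + x := Nat.mod_eq_of_lt (by omega)
      rw [h1, if_pos (by omega), if_pos h]
    · have h1 : (e + x) % p = e + x - p := by
        rw [Nat.mod_eq_sub_mod (by omega), Nat.mod_eq_of_lt (by omega)]
      rw [h1, if_neg (by omega), if_neg (by omega)]
  rw [Finset.sum_congr rfl hcong, ← Finset.card_filter]
  have : (Finset.range p).filter (fun x => x < p - e) = Finset.range (p - e) := by
    ext y
    simp only [Finset.mem_filter, Finset.mem_range]
    omega
  rw [this, Finset.card_range]
/-- For odd `p ≥ 3`, the warping degree of `B_W(p,p)` is at most `(p² - 1)/4`. -/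
theorem warpingDegree_wWord_odd (p : ℕ) (hp : 3 ≤ p) (ho : Odd p) :
    warpingDegree (wWord p p) ≤ (p ^ 2 - 1) / 4 := by
  obtain ⟨m, hm⟩ : ∃ m, p = 2 * m + 1 := by
    obtain ⟨t, ht⟩ := ho; exact ⟨t, by omega⟩
  have hm1 : 1 ≤ m := by omega
  have hp0 : 0 < p := by omega
  have hkey : (m * (p - 2)) % p = 1 := by
    have h1 : m * (p - 2) = p * (m - 1) + 1 := by
      obtain ⟨m', rfl⟩ : ∃ m', m = m' + 1 := ⟨m - 1, by omega⟩
      have e1 : p - 2 = 2 * m' + 1 := by omega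
      have e2 : m' + 1 - 1 = m' := rfl
      rw [e1, e2, hm]; ring
    rw [h1, Nat.mul_add_mod, Nat.mod_eq_of_lt (by omega)]
  set r : ℕ → ℕ := fun a => if a < p then (m * a) % p else a with hrdef
  have hr1 : ∀ a < p, r a = (m * a) % p := fun a ha => if_pos ha
  have hr2 : ∀ a, ¬ a < p → r a = a := fun a ha => if_neg ha
  have hinj : Function.Injective r := by
    intro a b hab
    by_cases ha : a < p <;> by_cases hb : b < p
    · rw [hr1 a ha, hr1 b hb] at hab
      calc a = ((p - 2) * ((m * a) % p)) % p := (key_inverse hp0 hkey a ha).symm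
        _ = ((p - 2) * ((m * b) % p)) % p := by rw [hab]
        _ = b := key_inverse hp0 hkey b hb
    · rw [hr1 a ha, hr2 b hb] at hab
      have : (m * a) % p < p := Nat.mod_lt _ hp0
      omega
    · rw [hr2 a ha, hr1 b hb] at hab
      have : (m * b) % p < p := Nat.mod_lt _ hp0
      omega
    · rw [hr2 a ha, hr2 b hb] at hab; exact hab
  have hcount : warpCount (wWord p p) r = m * (m + 1) := by
    unfold warpCount
    rw [length_wWord, length_filter_range, sum_range_mul_eq]
    have hsum : ∀ q ∈ Finset.range p, ∀ k ∈ Finset.range (p - 1),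
        (if (fun n => decide (r (underLabel (wWord p p) n) < r (overLabel (wWord p p) n)))
            (q * (p - 1) + k) = true then 1 else 0) =
          if k % 2 = 0
            then (if ((m * (k + 1)) % p + (m * q) % p) % p < (m * q) % p then 1 else 0)
            else (if (m * q) % p < ((m * (k + 1)) % p + (m * q) % p) % p then 1 else 0) := by
      intro q hq k hk
      rw [Finset.mem_range] at hq hk
      have hmod : (k + 1 + q) % p < p := Nat.mod_lt _ hp0
      simp only [decide_eq_true_eq]
      rw [overLabel_wWord hp0 hq hk, underLabel_wWord hp0 hq hk]
      have hru : r ((k + 1 + q) % p) = ((m * (k + 1)) % p + (m * q) % p) % p := by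
        rw [hr1 _ hmod, Nat.mul_mod_mod, show m * (k + 1 + q) = m * (k + 1) + m * q by ring,
          Nat.add_mod]
      by_cases hk2 : k % 2 = 0
      · simp only [hk2, ↓reduceIte, hru, hr1 q hq]
      · simp only [hk2, ↓reduceIte, hru, hr1 q hq]
    rw [Finset.sum_congr rfl (fun q hq => Finset.sum_congr rfl (fun k hk => hsum q hq k hk))]
    rw [Finset.sum_comm]
    rw [show p - 1 = 2 * m by omega, sum_range_two_mul]
    have hstep : ∀ j ∈ Finset.range m,
        ((∑ q ∈ Finset.range p, if (2 * j) % 2 = 0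
            then (if ((m * (2 * j + 1)) % p + (m * q) % p) % p < (m * q) % p then 1 else 0)
            else (if (m * q) % p < ((m * (2 * j + 1)) % p + (m * q) % p) % p then 1 else 0)) +
          ∑ q ∈ Finset.range p, if (2 * j + 1) % 2 = 0
            then (if ((m * (2 * j + 1 + 1)) % p + (m * q) % p) % p < (m * q) % p then 1 else 0)
            else (if (m * q) % p < ((m * (2 * j + 1 + 1)) % p + (m * q) % p) % p then 1 else 0))
        = m + 1 := by
      intro j hj
      rw [Finset.mem_range] at hj
      have e0 : (2 * j) % 2 = 0 := by omega
      have e1 : ¬ ((2 * j + 1) % 2 = 0) := by omega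
      have he : (m * (2 * j + 1)) % p = m - j := by
        have a1 : m * (2 * j + 1) = 2 * (m * j) + m := by ring
        have a2 : p * j = 2 * (m * j) + j := by rw [hm]; ring
        have a3 : m * (2 * j + 1) = p * j + (m - j) := by omega
        rw [a3, Nat.mul_add_mod, Nat.mod_eq_of_lt (by omega)]
      have he' : (m * (2 * j + 1 + 1)) % p = 2 * m - j := by
        have a1 : m * (2 * j + 1 + 1) = 2 * (m * j) + 2 * m := by ring
        have a2 : p * j = 2 * (m * j) + j := by rw [hm]; ring
        have a3 : m * (2 * j + 1 + 1) = p * j + (2 * m - j) := by omega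
        rw [a3, Nat.mul_add_mod, Nat.mod_eq_of_lt (by omega)]
      simp only [e0, e1, ↓reduceIte, he, he']
      have hA : (∑ q ∈ Finset.range p,
            if (m - j + (m * q) % p) % p < (m * q) % p then 1 else 0) = m - j :=
        (reindex_sum hp0 hkey (fun x => if (m - j + x) % p < x then 1 else 0)).trans
          (count_lt_shift hp0 (by omega) (by omega))
      have hB : (∑ q ∈ Finset.range p,
            if (m * q) % p < (2 * m - j + (m * q) % p) % p then 1 else 0) = p - (2 * m - j) :=
        (reindex_sum hp0 hkey (fun x => if x < (2 * m - j + x) % p then 1 else 0)).trans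
          (count_gt_shift hp0 (by omega) (by omega))
      rw [hA, hB]
      omega
    rw [Finset.sum_congr rfl hstep, Finset.sum_const, Finset.card_range, smul_eq_mul]
  have hle : warpingDegree (wWord p p) ≤ m * (m + 1) := by
    exact Nat.sInf_le ⟨r, hinj, hcount⟩
  have hp2 : p ^ 2 = 4 * (m * m) + 4 * m + 1 := by rw [hm]; ring
  have hmm : m * (m + 1) = m * m + m := by ring
  omega

end Weaving
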